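/- For every q with 3 < q < 6 there exists a constant C > 0 such that for all e, f ∈ ℝ: |(e+f)₊^q − e₊^q − q·e₊^{q−1}f − (q(q−1)/2)·e₊^{q−2}f²| ≤ C(|e|^{q−3} + |f|^{q−3})|f|³, where t₊ = max(t, 0). -/

import Mathlib

/-!
The left side is the second-order Taylor remainder of `g y = (y₊)^q` between `e` and `e + f`.
Since `q > 3`, `g` is twice differentiable and `g'' y = q(q-1)(y₊)^(q-2)` is locally Lipschitz
with constant `q(q-1)(q-2) A^(q-3)` on `[-A, A]`; two applications of the mean value theorem on
the segment from `e` to `e + f`, with `A = |e| + |f|`, bound the remainder by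
`q(q-1)(q-2) A^(q-3) |f|^3`, and `A^(q-3) ≤ 2^(q-3) (|e|^(q-3) + |f|^(q-3))`.
-/

open Set

lemma hasDerivAt_max_zero_rpow {p : ℝ} (hp : 1 < p) (x : ℝ) :
    HasDerivAt (fun y => max y 0 ^ p) (p * max x 0 ^ (p - 1)) x := by
  have hp0 : p ≠ 0 := by positivity
  have hp1 : p - 1 ≠ 0 := by linarith
  rcases lt_trichotomy x 0 with hx | rfl | hx
  · rw [max_eq_right hx.le, Real.zero_rpow hp1, mul_zero]
    refine (hasDerivAt_const x 0).congr_of_eventuallyEq ?_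
    filter_upwards [Iio_mem_nhds hx] with y hy
    rw [max_eq_right hy.le, Real.zero_rpow hp0]
  · rw [max_self, Real.zero_rpow hp1, mul_zero]
    have hleft : HasDerivWithinAt (fun y : ℝ => max y 0 ^ p) 0 (Iic 0) 0 := by
      refine (hasDerivWithinAt_const (0 : ℝ) (Iic 0) (0 : ℝ)).congr (fun y hy => ?_) ?_
      · rw [max_eq_right (mem_Iic.1 hy), Real.zero_rpow hp0]
      · rw [max_self, Real.zero_rpow hp0]
    have hright : HasDerivWithinAt (fun y : ℝ => max y 0 ^ p) 0 (Ici 0) 0 := by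
      have h := (Real.hasDerivAt_rpow_const (x := (0 : ℝ)) (Or.inr hp.le)).hasDerivWithinAt (s := Ici 0)
      rw [Real.zero_rpow hp1, mul_zero] at h
      refine h.congr (fun y hy => ?_) ?_
      · rw [max_eq_left (mem_Ici.1 hy)]
      · rw [max_self]
    have h := hleft.union hright
    rwa [Iic_union_Ici, hasDerivWithinAt_univ] at h
  · rw [max_eq_left hx.le]
    refine (Real.hasDerivAt_rpow_const (Or.inl hx.ne')).congr_of_eventuallyEq ?_
    filter_upwards [Ioi_mem_nhds hx] with y hy
    rw [max_eq_left hy.le]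

lemma abs_sub_le_of_hasDerivAt_of_abs_deriv_le {f f' : ℝ → ℝ} {a b C : ℝ}
    (hf : ∀ x ∈ uIcc a b, HasDerivAt f (f' x) x) (hC : ∀ x ∈ uIcc a b, |f' x| ≤ C) :
    |f b - f a| ≤ C * |b - a| :=
  Convex.norm_image_sub_le_of_norm_hasDerivWithin_le (fun x hx => (hf x hx).hasDerivWithinAt) hC
    (convex_uIcc a b) left_mem_uIcc right_mem_uIcc

lemma abs_max_zero_rpow_sub_le {p A x y : ℝ} (hp : 1 < p) (hx : |x| ≤ A) (hy : |y| ≤ A) :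
    |max x 0 ^ p - max y 0 ^ p| ≤ p * A ^ (p - 1) * |x - y| := by
  refine abs_sub_le_of_hasDerivAt_of_abs_deriv_le (fun z _ => hasDerivAt_max_zero_rpow hp z)
    fun z hz => ?_
  have hzA : |z| ≤ A := abs_le.2 (uIcc_subset_Icc (abs_le.1 hy) (abs_le.1 hx) hz)
  have hz0 : 0 ≤ max z 0 := le_max_right _ _
  rw [abs_of_nonneg (by positivity)]
  gcongr
  exact max_le ((le_abs_self z).trans hzA) ((abs_nonneg z).trans hzA)

lemma abs_taylor_two_le {g g' g'' : ℝ → ℝ} {a b M : ℝ}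
    (hg : ∀ x ∈ uIcc a b, HasDerivAt g (g' x) x) (hg' : ∀ x ∈ uIcc a b, HasDerivAt g' (g'' x) x)
    (hM : ∀ x ∈ uIcc a b, |g'' x - g'' a| ≤ M) :
    |g b - g a - g' a * (b - a) - g'' a / 2 * (b - a) ^ 2| ≤ M * |b - a| ^ 2 := by
  have hM0 : 0 ≤ M := (abs_nonneg _).trans (hM a left_mem_uIcc)
  have hfirst : ∀ x ∈ uIcc a b, |g' x - g' a - g'' a * (x - a)| ≤ M * |b - a| := by
    intro x hx
    have h := abs_sub_le_of_hasDerivAt_of_abs_deriv_le (f := fun y => g' y - g'' a * y)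
      (fun y hy => ((hg' y (uIcc_subset_uIcc_left hx hy)).sub
        ((hasDerivAt_id y).const_mul (g'' a))).congr_deriv (by simp))
      (fun y hy => hM y (uIcc_subset_uIcc_left hx hy))
    calc |g' x - g' a - g'' a * (x - a)| = |g' x - g'' a * x - (g' a - g'' a * a)| := by ring_nf
      _ ≤ M * |x - a| := h
      _ ≤ M * |b - a| := mul_le_mul_of_nonneg_left (abs_sub_left_of_mem_uIcc hx) hM0
  have h := abs_sub_le_of_hasDerivAt_of_abs_deriv_le
    (f := fun y => g y - g' a * y - g'' a / 2 * (y - a) ^ 2)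
    (fun y hy => (((hg y hy).sub ((hasDerivAt_id y).const_mul (g' a))).sub
      ((((hasDerivAt_id y).sub_const a).pow 2).const_mul (g'' a / 2))).congr_deriv
        (by simp only [id_eq]; push_cast; ring))
    hfirst
  calc |g b - g a - g' a * (b - a) - g'' a / 2 * (b - a) ^ 2|
      = |g b - g' a * b - g'' a / 2 * (b - a) ^ 2 - (g a - g' a * a - g'' a / 2 * (a - a) ^ 2)| := by
        ring_nf
    _ ≤ M * |b - a| * |b - a| := h
    _ = M * |b - a| ^ 2 := by ring

lemma add_rpow_le_two_rpow_mul_add {a b r : ℝ} (ha : 0 ≤ a) (hb : 0 ≤ b) (hr : 0 ≤ r) :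
    (a + b) ^ r ≤ 2 ^ r * (a ^ r + b ^ r) := by
  have hmax : max a b ^ r ≤ a ^ r + b ^ r := by
    rcases max_cases a b with ⟨h, -⟩ | ⟨h, -⟩ <;> rw [h]
    · linarith [Real.rpow_nonneg hb r]
    · linarith [Real.rpow_nonneg ha r]
  calc (a + b) ^ r ≤ (2 * max a b) ^ r := by
        gcongr; linarith [le_max_left a b, le_max_right a b]
    _ = 2 ^ r * max a b ^ r := Real.mul_rpow zero_le_two (le_max_of_le_left ha)
    _ ≤ 2 ^ r * (a ^ r + b ^ r) := by gcongr

lemma abs_max_zero_rpow_taylor_two_le {q : ℝ} (hq : 3 < q) (e f : ℝ) :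
    |max (e + f) 0 ^ q - max e 0 ^ q - q * max e 0 ^ (q - 1) * f
        - q * (q - 1) / 2 * max e 0 ^ (q - 2) * f ^ 2|
      ≤ q * (q - 1) * (q - 2) * (|e| + |f|) ^ (q - 3) * |f| ^ 3 := by
  have hq2 : 0 < q - 2 := by linarith
  have hqq : 0 < q * (q - 1) := by nlinarith
  set A := |e| + |f|
  have hA : ∀ x ∈ uIcc e (e + f), |x| ≤ A := fun x hx => by
    have := abs_sub_left_of_mem_uIcc hx
    rw [add_sub_cancel_left] at this
    linarith [abs_sub_abs_le_abs_sub x e]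
  have hg : ∀ x ∈ uIcc e (e + f), HasDerivAt (fun y => max y 0 ^ q) (q * max x 0 ^ (q - 1)) x :=
    fun x _ => hasDerivAt_max_zero_rpow (by linarith) x
  have hg' : ∀ x ∈ uIcc e (e + f), HasDerivAt (fun y => q * max y 0 ^ (q - 1))
      (q * (q - 1) * max x 0 ^ (q - 2)) x := fun x _ => by
    have h := (hasDerivAt_max_zero_rpow (p := q - 1) (by linarith) x).const_mul q
    rwa [sub_sub, one_add_one_eq_two, ← mul_assoc] at h
  have hg'' : ∀ x ∈ uIcc e (e + f), |q * (q - 1) * max x 0 ^ (q - 2)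
      - q * (q - 1) * max e 0 ^ (q - 2)| ≤ q * (q - 1) * (q - 2) * A ^ (q - 3) * |f| := by
    intro x hx
    have h := abs_max_zero_rpow_sub_le (p := q - 2) (by linarith) (hA x hx) (hA e left_mem_uIcc)
    rw [sub_sub, show (2 : ℝ) + 1 = 3 by norm_num] at h
    have hxe := abs_sub_left_of_mem_uIcc hx
    rw [add_sub_cancel_left] at hxe
    calc |q * (q - 1) * max x 0 ^ (q - 2) - q * (q - 1) * max e 0 ^ (q - 2)|
        = q * (q - 1) * |max x 0 ^ (q - 2) - max e 0 ^ (q - 2)| := by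
          rw [← mul_sub, abs_mul, abs_of_pos hqq]
      _ ≤ q * (q - 1) * ((q - 2) * A ^ (q - 3) * |f|) := by gcongr; exact h.trans (by gcongr)
      _ = q * (q - 1) * (q - 2) * A ^ (q - 3) * |f| := by ring
  have h := abs_taylor_two_le hg hg' hg''
  rw [add_sub_cancel_left, sq_abs] at h
  calc _ = |max (e + f) 0 ^ q - max e 0 ^ q - q * max e 0 ^ (q - 1) * f
        - q * (q - 1) * max e 0 ^ (q - 2) / 2 * f ^ 2| := by ring_nf
    _ ≤ q * (q - 1) * (q - 2) * A ^ (q - 3) * |f| * f ^ 2 := h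
    _ = q * (q - 1) * (q - 2) * A ^ (q - 3) * |f| ^ 3 := by rw [← sq_abs]; ring

theorem statement18_general (q : ℝ) (hq1 : 3 < q) :
    ∃ C > 0, ∀ e f : ℝ,
      |(max (e + f) 0) ^ q - (max e 0) ^ q - q * (max e 0) ^ (q - 1) * f
          - q * (q - 1) / 2 * (max e 0) ^ (q - 2) * f ^ 2|
        ≤ C * (|e| ^ (q - 3) + |f| ^ (q - 3)) * |f| ^ 3 := by
  have hq : 0 < q - 3 := by linarith
  have hc : 0 < q * (q - 1) * (q - 2) := by apply mul_pos (mul_pos _ _) <;> linarith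
  refine ⟨q * (q - 1) * (q - 2) * 2 ^ (q - 3), by positivity, fun e f => ?_⟩
  calc _ ≤ q * (q - 1) * (q - 2) * (|e| + |f|) ^ (q - 3) * |f| ^ 3 :=
        abs_max_zero_rpow_taylor_two_le hq1 e f
    _ ≤ q * (q - 1) * (q - 2) * (2 ^ (q - 3) * (|e| ^ (q - 3) + |f| ^ (q - 3))) * |f| ^ 3 := by
      gcongr
      exact add_rpow_le_two_rpow_mul_add (abs_nonneg e) (abs_nonneg f) hq.le
    _ = q * (q - 1) * (q - 2) * 2 ^ (q - 3) * (|e| ^ (q - 3) + |f| ^ (q - 3)) * |f| ^ 3 := by ring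

theorem statement18 (q : ℝ) (hq1 : 3 < q) (hq2 : q < 6) :
    ∃ C > 0, ∀ e f : ℝ,
      |(max (e + f) 0) ^ q - (max e 0) ^ q - q * (max e 0) ^ (q - 1) * f
          - q * (q - 1) / 2 * (max e 0) ^ (q - 2) * f ^ 2|
        ≤ C * (|e| ^ (q - 3) + |f| ^ (q - 3)) * |f| ^ 3 :=
  statement18_general q hq1
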